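/- arXiv:2308.03728 — 3 statements merged into one kernel-verified Lean document; each statement's English description precedes it below -/
import Mathlib

section
/- Let ℓ > 0 and c > 0 be real numbers. Let ψ : ℝ → ℝ be smooth with ψ(s) > 0 for all s ∈ [0, ℓ], and let P : ℝ → ℝ be continuous with P(s) ≥ c for all s ∈ [0, ℓ]. Suppose that for every smooth function f : ℝ → ℝ with f(0) = f(ℓ) = 0 one has ∫₀^ℓ ( ψ(s)⁻¹ f′(s)² − (P(s) + ψ(s)⁻² ψ′(s)²) ψ(s)⁻¹ f(s)² ) ds ≥ 0. Then ℓ ≤ (2/√3) · (π/√c). -/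
open Real

lemma mots_sin_sq (ℓ : ℝ) (hℓ : 0 < ℓ) :
    (∫ s in (0:ℝ)..ℓ, Real.sin (π/ℓ*s)^2) = ℓ/2 := by
  have hk : (π/ℓ : ℝ) ≠ 0 := ne_of_gt (div_pos Real.pi_pos hℓ)
  rw [intervalIntegral.integral_comp_mul_left (fun x => Real.sin x ^ 2) hk]
  rw [mul_zero, div_mul_cancel₀ _ hℓ.ne', integral_sin_sq]
  simp [Real.sin_pi, smul_eq_mul]
  field_simp

lemma mots_cos_sq (ℓ : ℝ) (hℓ : 0 < ℓ) :
    (∫ s in (0:ℝ)..ℓ, Real.cos (π/ℓ*s)^2) = ℓ/2 := by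
  have hk : (π/ℓ : ℝ) ≠ 0 := ne_of_gt (div_pos Real.pi_pos hℓ)
  rw [intervalIntegral.integral_comp_mul_left (fun x => Real.cos x ^ 2) hk]
  rw [mul_zero, div_mul_cancel₀ _ hℓ.ne', integral_cos_sq]
  simp [Real.sin_pi, smul_eq_mul]
  field_simp

lemma mots_key (p q Ps c G G' : ℝ) (hp : 0 < p) (hc : c ≤ Ps) :
    p⁻¹*((q/(2*Real.sqrt p))*G + Real.sqrt p*G')^2
      - (Ps + (p⁻¹)^2*q^2)*p⁻¹*(Real.sqrt p*G)^2 ≤ 4/3*G'^2 - c*G^2 := by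
  obtain ⟨r, hr, rfl⟩ : ∃ r : ℝ, 0 < r ∧ p = r^2 :=
    ⟨Real.sqrt p, Real.sqrt_pos.2 hp, (Real.sq_sqrt hp.le).symm⟩
  rw [Real.sqrt_sq hr.le]
  have hr0 : r ≠ 0 := hr.ne'
  have key : 0 ≤ (2*r^2*G' - 3*q*G)^2 := sq_nonneg _
  have hPc : 0 ≤ (Ps - c)*G^2 := mul_nonneg (sub_nonneg.2 hc) (sq_nonneg G)
  have iden : 4/3*G'^2 - c*G^2
      - ((r^2)⁻¹*((q/(2*r))*G + r*G')^2 - (Ps + ((r^2)⁻¹)^2*q^2)*(r^2)⁻¹*(r*G)^2)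
      = (2*r^2*G' - 3*q*G)^2/(12*r^4) + (Ps - c)*G^2 := by
    field_simp
    ring
  have h2 : 0 ≤ (2*r^2*G' - 3*q*G)^2/(12*r^4) := div_nonneg key (by positivity)
  linarith [iden, h2, hPc]

lemma mots_err (A B xu xv yu yv c₁ c₂ ε : ℝ) (hA : 0 ≤ A) (hB : 0 ≤ B)
    (hε : 0 < ε) (hε1 : ε ≤ 1) (hc₁ : 0 ≤ c₁) (hc₂ : 0 ≤ c₂)
    (h1 : |xu - xv| ≤ ε*c₁) (h2 : |yu - yv| ≤ ε*c₂) :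
    A*xu^2 - B*yu^2 ≤ (A*xv^2 - B*yv^2)
      + ε*(A*(c₁^2 + 2*c₁*|xv|) + B*(c₂^2 + 2*c₂*|yv|)) := by
  have a1 : xv*(xu-xv) ≤ |xv| * (ε*c₁) := by
    calc xv*(xu-xv) ≤ |xv*(xu-xv)| := le_abs_self _
    _ = |xv| * |xu-xv| := abs_mul _ _
    _ ≤ |xv| * (ε*c₁) := mul_le_mul_of_nonneg_left h1 (abs_nonneg xv)
  have a2 : (xu-xv)^2 ≤ (ε*c₁)^2 := by
    rw [← sq_abs]; exact pow_le_pow_left₀ (abs_nonneg _) h1 2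
  have b1 : -(yv*(yu-yv)) ≤ |yv| * (ε*c₂) := by
    calc -(yv*(yu-yv)) ≤ |yv*(yu-yv)| := neg_le_abs _
    _ = |yv| * |yu-yv| := abs_mul _ _
    _ ≤ |yv| * (ε*c₂) := mul_le_mul_of_nonneg_left h2 (abs_nonneg yv)
  have e1 : xu^2 - xv^2 ≤ ε*(c₁^2 + 2*c₁*|xv|) := by
    nlinarith [mul_nonneg (mul_nonneg hε.le (sub_nonneg.2 hε1)) (sq_nonneg c₁)]
  have e2 : yv^2 - yu^2 ≤ ε*(c₂^2 + 2*c₂*|yv|) := by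
    nlinarith [sq_nonneg (yu-yv), mul_nonneg (mul_nonneg hε.le hε.le) (sq_nonneg c₂),
      mul_nonneg (mul_nonneg hε.le (sub_nonneg.2 hε1)) (sq_nonneg c₂)]
  nlinarith [mul_le_mul_of_nonneg_left e1 hA, mul_le_mul_of_nonneg_left e2 hB]

open Polynomial in
lemma mots_antideriv (p : ℝ[X]) : (p.sum fun n a => C (a / (n+1)) * X^(n+1)).derivative = p := by
  rw [Polynomial.sum, map_sum]
  conv_rhs => rw [← Polynomial.sum_C_mul_X_pow_eq p, Polynomial.sum]
  refine Finset.sum_congr rfl fun n _ => ?_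
  rw [Polynomial.derivative_C_mul_X_pow]
  have : ((n:ℝ) + 1) ≠ 0 := by positivity
  congr 1
  · push_cast; field_simp

open Polynomial in
lemma mots_contDiff_eval (q : ℝ[X]) : ContDiff ℝ (⊤ : ℕ∞) (fun x => q.eval x) := by
  have : (fun x : ℝ => q.eval x)
      = fun x => ∑ i ∈ Finset.range (q.natDegree + 1), q.coeff i * x ^ i := by
    funext x; rw [Polynomial.eval_eq_sum_range]
  rw [this]
  exact ContDiff.sum fun i _ => contDiff_const.mul (contDiff_id.pow i)

/-- The analytic core of the diameter bound for stable MOTS: if the weighted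
one-dimensional stability inequality holds for all smooth test functions
vanishing at the endpoints, then `ℓ ≤ (2/√3) · (π/√c)`. -/
theorem stmt_0 (ℓ c : ℝ) (hℓ : 0 < ℓ) (hc : 0 < c)
    (ψ P : ℝ → ℝ) (hψ : ContDiff ℝ (⊤ : ℕ∞) ψ)
    (hψpos : ∀ s ∈ Set.Icc (0 : ℝ) ℓ, 0 < ψ s)
    (hP : Continuous P) (hPc : ∀ s ∈ Set.Icc (0 : ℝ) ℓ, c ≤ P s)
    (hstab : ∀ f : ℝ → ℝ, ContDiff ℝ (⊤ : ℕ∞) f → f 0 = 0 → f ℓ = 0 →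
      0 ≤ ∫ s in (0 : ℝ)..ℓ,
        ((ψ s)⁻¹ * (deriv f s) ^ 2
          - (P s + ((ψ s)⁻¹) ^ 2 * (deriv ψ s) ^ 2) * (ψ s)⁻¹ * (f s) ^ 2)) :
    ℓ ≤ (2 / Real.sqrt 3) * (Real.pi / Real.sqrt c) := by
  have hk : 0 < π/ℓ := div_pos Real.pi_pos hℓ
  set k := π/ℓ with hkdef
  have hkl : k*ℓ = π := div_mul_cancel₀ _ hℓ.ne'
  set g : ℝ → ℝ := fun s => Real.sin (k*s) with hgdef
  set dg : ℝ → ℝ := fun s => k * Real.cos (k*s) with hdgdef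
  have hg : ∀ s, HasDerivAt g (dg s) s := by
    intro s
    have h1 : HasDerivAt (fun x : ℝ => k * x) (k * 1) s := (hasDerivAt_id s).const_mul k
    have h2 : HasDerivAt (fun x : ℝ => Real.sin (k*x)) (Real.cos (k*s) * (k*1)) s :=
      (Real.hasDerivAt_sin (k*s)).comp s h1
    have h3 : Real.cos (k*s) * (k*1) = dg s := by rw [hdgdef]; ring
    exact h3 ▸ h2
  have hgcd : ContDiff ℝ (⊤ : ℕ∞) g := Real.contDiff_sin.comp (contDiff_const.mul contDiff_id)
  have hdgc : Continuous dg := by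
    have : Continuous fun s : ℝ => Real.cos (k*s) :=
      Real.continuous_cos.comp (continuous_const.mul continuous_id)
    exact continuous_const.mul this
  have hg1 : ∀ s, |g s| ≤ 1 := fun s => Real.abs_sin_le_one _
  have hdgk : ∀ s, |dg s| ≤ k := by
    intro s
    rw [hdgdef]
    calc |k * Real.cos (k*s)| = k * |Real.cos (k*s)| := by
          rw [abs_mul, abs_of_pos hk]
    _ ≤ k * 1 := mul_le_mul_of_nonneg_left (Real.abs_cos_le_one _) hk.le
    _ = k := mul_one k
  -- the function √ψ and its derivative
  set v : ℝ → ℝ := fun s => Real.sqrt (ψ s) with hvdef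
  set vd : ℝ → ℝ := fun s => deriv ψ s / (2*Real.sqrt (ψ s)) with hvddef
  have hψd : ∀ s, HasDerivAt ψ (deriv ψ s) s :=
    fun s => ((hψ.differentiable (by simp)) s).hasDerivAt
  have hv : ∀ s ∈ Set.Icc (0:ℝ) ℓ, HasDerivAt v (vd s) s := by
    intro s hs
    have h := (Real.hasDerivAt_sqrt (hψpos s hs).ne').comp s (hψd s)
    have : (1/(2*Real.sqrt (ψ s))) * deriv ψ s = vd s := by
      rw [hvddef]; ring
    rw [← this]
    exact h
  have hcψ : Continuous ψ := hψ.continuous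
  have hcψ' : Continuous (deriv ψ) := hψ.continuous_deriv (by simp)
  have hIcc : Set.uIcc (0:ℝ) ℓ = Set.Icc 0 ℓ := Set.uIcc_of_le hℓ.le
  have hvc : Continuous v := Real.continuous_sqrt.comp hcψ
  have hvdc : ContinuousOn vd (Set.Icc 0 ℓ) := by
    apply hcψ'.continuousOn.div (continuous_const.mul hvc).continuousOn
    intro x hx
    have := hψpos x hx
    have : 0 < Real.sqrt (ψ x) := Real.sqrt_pos.2 this
    exact mul_ne_zero two_ne_zero this.ne'
  -- abbreviations
  set A : ℝ → ℝ := fun s => (ψ s)⁻¹ with hAdef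
  set B : ℝ → ℝ := fun s => (P s + ((ψ s)⁻¹)^2*(deriv ψ s)^2) * (ψ s)⁻¹ with hBdef
  set Xv : ℝ → ℝ := fun s => vd s * g s + v s * dg s with hXvdef
  set Yv : ℝ → ℝ := fun s => v s * g s with hYvdef
  set c₁ : ℝ := 1 + ℓ*k with hc₁def
  have hc₁0 : 0 ≤ c₁ := by rw [hc₁def]; positivity
  set R : ℝ → ℝ := fun s => A s * (c₁^2 + 2*c₁*|Xv s|) + B s * (ℓ^2 + 2*ℓ*|Yv s|) with hRdef
  set Ξ : ℝ → ℝ := fun s => 4/3*(dg s)^2 - c*(g s)^2 with hΞdef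
  have hA0 : ∀ s ∈ Set.Icc (0:ℝ) ℓ, 0 ≤ A s := fun s hs => (inv_pos.2 (hψpos s hs)).le
  have hB0 : ∀ s ∈ Set.Icc (0:ℝ) ℓ, 0 ≤ B s := by
    intro s hs
    have h1 := hψpos s hs
    have h2 := (hc.trans_le (hPc s hs)).le
    rw [hBdef]
    positivity
  -- continuity
  have hAc : ContinuousOn A (Set.Icc 0 ℓ) :=
    hcψ.continuousOn.inv₀ (fun x hx => (hψpos x hx).ne')
  have hBc : ContinuousOn B (Set.Icc 0 ℓ) :=
    ((hP.continuousOn.add ((hAc.pow 2).mul (hcψ'.continuousOn.pow 2)))).mul hAc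
  have hXvc : ContinuousOn Xv (Set.Icc 0 ℓ) :=
    (hvdc.mul hgcd.continuous.continuousOn).add (hvc.continuousOn.mul hdgc.continuousOn)
  have hYvc : ContinuousOn Yv (Set.Icc 0 ℓ) := hvc.continuousOn.mul hgcd.continuous.continuousOn
  have hRc : ContinuousOn R (Set.Icc 0 ℓ) := by
    apply ContinuousOn.add
    · exact hAc.mul (continuousOn_const.add (continuousOn_const.mul hXvc.abs))
    · exact hBc.mul (continuousOn_const.add (continuousOn_const.mul hYvc.abs))
  have hΞc : Continuous Ξ := by
    apply Continuous.sub
    · exact continuous_const.mul (hdgc.pow 2)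
    · exact continuous_const.mul ((hgcd.continuous).pow 2)
  have hRint : IntervalIntegrable R MeasureTheory.volume 0 ℓ := by
    apply ContinuousOn.intervalIntegrable; rwa [hIcc]
  have hΞint : IntervalIntegrable Ξ MeasureTheory.volume 0 ℓ := hΞc.intervalIntegrable 0 ℓ
  set CR : ℝ := ∫ s in (0:ℝ)..ℓ, R s with hCRdef
  -- value of ∫ Ξ
  have hΞval : (∫ s in (0:ℝ)..ℓ, Ξ s) = (4/3*k^2 - c)*(ℓ/2) := by
    have e1 : ∀ s, Ξ s = (4/3*k^2) * Real.cos (π/ℓ*s)^2 - c * Real.sin (π/ℓ*s)^2 := by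
      intro s; rw [hΞdef, hdgdef, hgdef, hkdef]; ring
    have i1 : IntervalIntegrable (fun s => (4/3*k^2) * Real.cos (π/ℓ*s)^2)
        MeasureTheory.volume 0 ℓ := by
      apply Continuous.intervalIntegrable; fun_prop
    have i2 : IntervalIntegrable (fun s => c * Real.sin (π/ℓ*s)^2)
        MeasureTheory.volume 0 ℓ := by
      apply Continuous.intervalIntegrable; fun_prop
    rw [intervalIntegral.integral_congr (fun s _ => e1 s), intervalIntegral.integral_sub i1 i2,
      intervalIntegral.integral_const_mul, intervalIntegral.integral_const_mul,
      mots_cos_sq ℓ hℓ, mots_sin_sq ℓ hℓ]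
    ring
  -- main per-ε inequality
  have main : ∀ ε : ℝ, 0 < ε → ε ≤ 1 → 0 ≤ (4/3*k^2 - c)*(ℓ/2) + ε * CR := by
    intro ε hε hε1
    obtain ⟨p, hp⟩ := exists_polynomial_near_of_continuousOn 0 ℓ vd hvdc ε hε
    set q : Polynomial ℝ :=
      (p.sum fun n a => Polynomial.C (a/(n+1)) * Polynomial.X^(n+1)) + Polynomial.C (v 0)
      with hqdef
    have hqd : q.derivative = p := by
      rw [hqdef, Polynomial.derivative_add, mots_antideriv, Polynomial.derivative_C, add_zero]
    set u : ℝ → ℝ := fun x => q.eval x with hudef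
    have hu : ∀ x, HasDerivAt u (p.eval x) x := by
      intro x
      have := q.hasDerivAt x
      rwa [hqd] at this
    have huc : Continuous u := (mots_contDiff_eval q).continuous
    have hpc : Continuous fun x => p.eval x := (mots_contDiff_eval p).continuous
    have hu0 : u 0 = v 0 := by
      rw [hudef]
      simp only [hqdef, Polynomial.eval_add, Polynomial.eval_C]
      rw [Polynomial.sum, Polynomial.eval_finset_sum]
      simp
    have huv : ∀ x ∈ Set.Icc (0:ℝ) ℓ, |u x - v x| ≤ ε*ℓ := by
      intro x hx
      have hxIcc : Set.uIcc (0:ℝ) x = Set.Icc 0 x := Set.uIcc_of_le hx.1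
      have hsub : Set.Icc (0:ℝ) x ⊆ Set.Icc 0 ℓ := Set.Icc_subset_Icc le_rfl hx.2
      have hvx : (∫ t in (0:ℝ)..x, vd t) = v x - v 0 := by
        apply intervalIntegral.integral_eq_sub_of_hasDerivAt
        · intro t ht; exact hv t (hsub (hxIcc ▸ ht))
        · apply ContinuousOn.intervalIntegrable; rw [hxIcc]; exact hvdc.mono hsub
      have hux : (∫ t in (0:ℝ)..x, p.eval t) = u x - u 0 := by
        apply intervalIntegral.integral_eq_sub_of_hasDerivAt
        · intro t _; exact hu t
        · exact hpc.intervalIntegrable 0 x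
      have hdiff : u x - v x = ∫ t in (0:ℝ)..x, (p.eval t - vd t) := by
        rw [intervalIntegral.integral_sub (hpc.intervalIntegrable 0 x)
          (by apply ContinuousOn.intervalIntegrable; rw [hxIcc]; exact hvdc.mono hsub),
          hvx, hux, hu0]
        ring
      rw [hdiff]
      have hb : ∀ t ∈ Set.uIoc (0:ℝ) x, ‖p.eval t - vd t‖ ≤ ε := by
        intro t ht
        rw [Set.uIoc_of_le hx.1] at ht
        exact (hp t ⟨ht.1.le, ht.2.trans hx.2⟩).le
      calc |∫ t in (0:ℝ)..x, (p.eval t - vd t)|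
          ≤ ε * |x - 0| := intervalIntegral.norm_integral_le_of_norm_le_const hb
        _ = ε * x := by rw [sub_zero, abs_of_nonneg hx.1]
        _ ≤ ε * ℓ := mul_le_mul_of_nonneg_left hx.2 hε.le
    set f : ℝ → ℝ := fun x => u x * g x with hfdef
    have hf : ContDiff ℝ (⊤ : ℕ∞) f := (mots_contDiff_eval q).mul hgcd
    have hf0 : f 0 = 0 := by simp [hfdef, hgdef]
    have hfl : f ℓ = 0 := by simp [hfdef, hgdef, hkl]
    have hfd : ∀ s, deriv f s = p.eval s * g s + u s * dg s :=
      fun s => ((hu s).mul (hg s)).deriv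
    have H := hstab f hf hf0 hfl
    set Φ : ℝ → ℝ := fun s => A s * (p.eval s * g s + u s * dg s)^2 - B s * (u s * g s)^2
      with hΦdef
    have hΦ : 0 ≤ ∫ s in (0:ℝ)..ℓ, Φ s := by
      refine le_of_le_of_eq H (intervalIntegral.integral_congr fun s _ => ?_)
      rw [hΦdef, hfd s]
    -- pointwise comparison on [0, ℓ]
    have hpt : ∀ s ∈ Set.Icc (0:ℝ) ℓ, Φ s ≤ Ξ s + ε * R s := by
      intro s hs
      have h1 : |p.eval s * g s + u s * dg s - Xv s| ≤ ε*c₁ := by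
        have e : p.eval s * g s + u s * dg s - Xv s
            = (p.eval s - vd s)*(g s) + (u s - v s)*(dg s) := by
          rw [hXvdef]; ring
        have t1 : |p.eval s - vd s| * |g s| ≤ ε * 1 :=
          mul_le_mul (hp s hs).le (hg1 s) (abs_nonneg _) hε.le
        have t2 : |u s - v s| * |dg s| ≤ (ε*ℓ) * k :=
          mul_le_mul (huv s hs) (hdgk s) (abs_nonneg _) (by positivity)
        have t3 : ε*1 + (ε*ℓ)*k = ε*c₁ := by rw [hc₁def]; ring
        rw [e]
        refine (abs_add_le _ _).trans ?_
        rw [abs_mul, abs_mul]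
        linarith [t1, t2]
      have h2 : |u s * g s - Yv s| ≤ ε*ℓ := by
        have e : u s * g s - Yv s = (u s - v s)*(g s) := by rw [hYvdef]; ring
        have t1 : |u s - v s| * |g s| ≤ (ε*ℓ) * 1 :=
          mul_le_mul (huv s hs) (hg1 s) (abs_nonneg _) (by positivity)
        rw [e, abs_mul]
        linarith [t1]
      have herr := mots_err (A s) (B s) (p.eval s * g s + u s * dg s) (Xv s)
        (u s * g s) (Yv s) c₁ ℓ ε (hA0 s hs) (hB0 s hs) hε hε1 hc₁0 hℓ.le h1 h2
      have hkey := mots_key (ψ s) (deriv ψ s) (P s) c (g s) (dg s) (hψpos s hs) (hPc s hs)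
      have hkey' : A s * (Xv s)^2 - B s * (Yv s)^2 ≤ Ξ s := by
        have e : A s * (Xv s)^2 - B s * (Yv s)^2
            = (ψ s)⁻¹*((deriv ψ s/(2*Real.sqrt (ψ s)))*(g s) + Real.sqrt (ψ s)*(dg s))^2
              - (P s + ((ψ s)⁻¹)^2*(deriv ψ s)^2)*(ψ s)⁻¹*(Real.sqrt (ψ s)*(g s))^2 := by
          rw [hAdef, hBdef, hXvdef, hYvdef, hvdef, hvddef]
        rw [e, hΞdef]
        exact hkey
      have hRs : R s = A s*(c₁^2 + 2*c₁*|Xv s|) + B s*(ℓ^2 + 2*ℓ*|Yv s|) := rfl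
      have step1 : Φ s ≤ (A s * (Xv s)^2 - B s * (Yv s)^2) + ε * R s := by
        rw [hRs]; exact herr
      linarith [hkey', step1, mul_le_mul_of_nonneg_left (le_refl (R s)) hε.le]
    have hΦc : ContinuousOn Φ (Set.Icc 0 ℓ) := by
      apply ContinuousOn.sub
      · exact hAc.mul (((hpc.continuousOn.mul hgcd.continuous.continuousOn).add
          (huc.continuousOn.mul hdgc.continuousOn)).pow 2)
      · exact hBc.mul ((huc.continuousOn.mul hgcd.continuous.continuousOn).pow 2)
    have hΦint : IntervalIntegrable Φ MeasureTheory.volume 0 ℓ := by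
      apply ContinuousOn.intervalIntegrable; rwa [hIcc]
    have hΞRint : IntervalIntegrable (fun s => Ξ s + ε * R s) MeasureTheory.volume 0 ℓ :=
      hΞint.add (hRint.const_mul ε)
    have hmono := intervalIntegral.integral_mono_on hℓ.le hΦint hΞRint hpt
    have hsplit : (∫ s in (0:ℝ)..ℓ, (Ξ s + ε * R s)) = (4/3*k^2 - c)*(ℓ/2) + ε*CR := by
      rw [intervalIntegral.integral_add hΞint (hRint.const_mul ε),
        intervalIntegral.integral_const_mul, hΞval, hCRdef]
    linarith [hΦ, hmono, hsplit.symm.le]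
  -- deduce the clean inequality
  have hD : 0 ≤ (4/3*k^2 - c)*(ℓ/2) := by
    by_contra hneg
    push_neg at hneg
    set D : ℝ := (4/3*k^2 - c)*(ℓ/2) with hDdef
    have hC : CR ≤ |CR| := le_abs_self _
    have hCpos : 0 < |CR| + 1 := by positivity
    have hεpos : 0 < min 1 (-D/(2*(|CR|+1))) := by
      apply lt_min one_pos
      apply div_pos (by linarith) (by positivity)
    set ε : ℝ := min 1 (-D/(2*(|CR|+1))) with hεdef
    have hε1 : ε ≤ 1 := min_le_left _ _
    have hεle : ε ≤ -D/(2*(|CR|+1)) := min_le_right _ _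
    have hmain := main ε hεpos hε1
    have h2 : ε*CR ≤ ε*|CR| := mul_le_mul_of_nonneg_left hC hεpos.le
    have h3 : ε*(2*(|CR|+1)) ≤ -D := by
      rw [← le_div_iff₀ (by positivity : (0:ℝ) < 2*(|CR|+1))]
      exact hεle
    nlinarith [abs_nonneg CR, hεpos]
  have h3c : 3*c*ℓ^2 ≤ 4*π^2 := by
    have hck : c ≤ 4/3*k^2 := by nlinarith [hD, hℓ]
    have hk2 : k^2*ℓ^2 = π^2 := by
      rw [hkdef]; field_simp
    nlinarith [mul_le_mul_of_nonneg_right hck (sq_nonneg ℓ), hk2]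
  have hs3 : (0:ℝ) < Real.sqrt 3 := Real.sqrt_pos.2 (by norm_num)
  have hsc : 0 < Real.sqrt c := Real.sqrt_pos.2 hc
  rw [div_mul_div_comm, le_div_iff₀ (by positivity)]
  have hsq : (ℓ*(Real.sqrt 3*Real.sqrt c))^2 ≤ (2*π)^2 := by
    have h1 : Real.sqrt 3^2 = 3 := Real.sq_sqrt (by norm_num)
    have h2 : Real.sqrt c^2 = c := Real.sq_sqrt hc.le
    have e : (ℓ*(Real.sqrt 3*Real.sqrt c))^2 = 3*c*ℓ^2 := by
      calc (ℓ*(Real.sqrt 3*Real.sqrt c))^2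
          = Real.sqrt 3^2 * Real.sqrt c^2 * ℓ^2 := by ring
        _ = 3*c*ℓ^2 := by rw [h1, h2]
    rw [e]
    nlinarith [h3c]
  have := Real.sqrt_le_sqrt hsq
  rwa [Real.sqrt_sq (by positivity), Real.sqrt_sq (by positivity)] at this
end

section
/- Let ℓ > 0 and c > 0 be real numbers. Let ψ : ℝ → ℝ be smooth with ψ(s) > 0 for all s ∈ [0, ℓ], and let P : ℝ → ℝ be continuous with P(s) ≥ c for all s ∈ [0, ℓ]. Define f₀(s) = √(ψ(s)) · sin(π s / ℓ). If ∫₀^ℓ ( ψ(s)⁻¹ f₀′(s)² − (P(s) + ψ(s)⁻² ψ′(s)²) ψ(s)⁻¹ f₀(s)² ) ds ≥ 0, then ℓ ≤ (2/√3) · (π/√c). -/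
lemma key_q (q a Ps c k k' : ℝ) (hq : 0 < q) (hPc : c ≤ Ps) :
    (q^2)⁻¹ * (a / (2 * q) * k + q * k') ^ 2
      - (Ps + ((q^2)⁻¹) ^ 2 * a ^ 2) * (q^2)⁻¹ * (q * k) ^ 2
      ≤ (4/3) * k' ^ 2 - c * k ^ 2 := by
  have h1 : (0:ℝ) ≤ (Ps - c) * k ^ 2 := by nlinarith [sq_nonneg k]
  have h2 : (0:ℝ) ≤ (2 * q ^ 2 * k' - 3 * a * k) ^ 2 := sq_nonneg _
  have hqne : q ≠ 0 := hq.ne'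
  have key : (q^2)⁻¹ * (a / (2 * q) * k + q * k') ^ 2
      = (a/(2*q^2)*k + k')^2 := by
    field_simp
  rw [key]
  have key2 : (Ps + ((q^2)⁻¹) ^ 2 * a ^ 2) * (q^2)⁻¹ * (q * k) ^ 2
      = Ps * k^2 + (a/q^2)^2 * k^2 := by
    field_simp
  rw [key2]
  have key3 : (a/(2*q^2)*k + k')^2 = (1/4)*(a/q^2)^2*k^2 + (a/q^2)*k*k' + k'^2 := by
    field_simp
    ring
  rw [key3]
  have h4 : (0:ℝ) ≤ ((3/2)*(a/q^2)*k - k')^2 := sq_nonneg _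
  nlinarith [h1, h4]

open Real intervalIntegral in
lemma cos_sq_int (ℓ : ℝ) (hℓ : 0 < ℓ) :
    ∫ s in (0:ℝ)..ℓ, Real.cos (Real.pi / ℓ * s) ^ 2 = ℓ / 2 := by
  have hc : Real.pi / ℓ ≠ 0 := by positivity
  rw [intervalIntegral.integral_comp_mul_left (fun x => Real.cos x ^ 2) hc]
  rw [mul_zero, show Real.pi / ℓ * ℓ = Real.pi by field_simp]
  rw [integral_cos_sq]
  simp [Real.sin_pi]
  field_simp

open Real intervalIntegral in
lemma sin_sq_int (ℓ : ℝ) (hℓ : 0 < ℓ) :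
    ∫ s in (0:ℝ)..ℓ, Real.sin (Real.pi / ℓ * s) ^ 2 = ℓ / 2 := by
  have hc : Real.pi / ℓ ≠ 0 := by positivity
  rw [intervalIntegral.integral_comp_mul_left (fun x => Real.sin x ^ 2) hc]
  rw [mul_zero, show Real.pi / ℓ * ℓ = Real.pi by field_simp]
  rw [integral_sin_sq]
  simp [Real.sin_pi]
  field_simp



/-- Single-test-function version of the analytic core of the diameter bound:
testing the weighted stability inequality only against
`f₀(s) = √(ψ s) · sin (π s / ℓ)` already forces `ℓ ≤ (2/√3) · (π/√c)`. -/
theorem stmt_1 (ℓ c : ℝ) (hℓ : 0 < ℓ) (hc : 0 < c)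
    (ψ P : ℝ → ℝ) (hψ : ContDiff ℝ (⊤ : ℕ∞) ψ)
    (hψpos : ∀ s ∈ Set.Icc (0 : ℝ) ℓ, 0 < ψ s)
    (hP : Continuous P) (hPc : ∀ s ∈ Set.Icc (0 : ℝ) ℓ, c ≤ P s)
    (f₀ : ℝ → ℝ) (hf₀ : f₀ = fun s => Real.sqrt (ψ s) * Real.sin (Real.pi * s / ℓ))
    (hstab : 0 ≤ ∫ s in (0 : ℝ)..ℓ,
        ((ψ s)⁻¹ * (deriv f₀ s) ^ 2
          - (P s + ((ψ s)⁻¹) ^ 2 * (deriv ψ s) ^ 2) * (ψ s)⁻¹ * (f₀ s) ^ 2)) :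
    ℓ ≤ (2 / Real.sqrt 3) * (Real.pi / Real.sqrt c) := by
  set U : Set ℝ := {s | 0 < ψ s} with hU
  have hUopen : IsOpen U := isOpen_lt continuous_const hψ.continuous
  have hIccU : Set.Icc (0:ℝ) ℓ ⊆ U := fun s hs => hψpos s hs
  set k : ℝ → ℝ := fun s => Real.sin (Real.pi * s / ℓ) with hk
  set k' : ℝ → ℝ := fun s => Real.pi / ℓ * Real.cos (Real.pi * s / ℓ) with hk'
  set g₁ : ℝ → ℝ := fun s => deriv ψ s / (2 * Real.sqrt (ψ s)) * k s
      + Real.sqrt (ψ s) * k' s with hg₁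
  -- derivative formula on U
  have hderiv : ∀ s ∈ U, HasDerivAt f₀ (g₁ s) s := by
    intro s hs
    have hψs : (0:ℝ) < ψ s := hs
    have hψd : HasDerivAt ψ (deriv ψ s) s :=
      (hψ.differentiable (by simp) s).hasDerivAt
    have hsq : HasDerivAt (fun t => Real.sqrt (ψ t))
        (1 / (2 * Real.sqrt (ψ s)) * deriv ψ s) s :=
      (Real.hasDerivAt_sqrt hψs.ne').comp s hψd
    have hin : HasDerivAt (fun t => Real.pi * t / ℓ) (Real.pi / ℓ) s := by
      simpa using ((hasDerivAt_id s).const_mul Real.pi).div_const ℓ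
    have hsin : HasDerivAt (fun t => Real.sin (Real.pi * t / ℓ))
        (Real.cos (Real.pi * s / ℓ) * (Real.pi / ℓ)) s :=
      (Real.hasDerivAt_sin _).comp s hin
    have := hsq.mul hsin
    rw [hf₀]
    refine this.congr_deriv ?_
    simp only [hg₁, hk, hk']
    ring
  have hderiv' : ∀ s ∈ U, deriv f₀ s = g₁ s := fun s hs => (hderiv s hs).deriv
  -- the integrands
  set F : ℝ → ℝ := fun s => (ψ s)⁻¹ * (deriv f₀ s) ^ 2
      - (P s + ((ψ s)⁻¹) ^ 2 * (deriv ψ s) ^ 2) * (ψ s)⁻¹ * (f₀ s) ^ 2 with hF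
  set G : ℝ → ℝ := fun s => (4/3) * (k' s) ^ 2 - c * (k s) ^ 2 with hG
  -- continuity of F on Icc
  have hFcont : ContinuousOn F (Set.Icc 0 ℓ) := by
    have h1 : ContinuousOn (fun s => (ψ s)⁻¹ * (g₁ s) ^ 2
        - (P s + ((ψ s)⁻¹) ^ 2 * (deriv ψ s) ^ 2) * (ψ s)⁻¹
          * (Real.sqrt (ψ s) * k s) ^ 2) U := by
      have hψc : Continuous ψ := hψ.continuous
      have hdψc : Continuous (deriv ψ) := hψ.continuous_deriv (by simp)
      have hne : ∀ s ∈ U, ψ s ≠ 0 := fun s hs => ne_of_gt hs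
      have hsqne : ∀ s ∈ U, (2 : ℝ) * Real.sqrt (ψ s) ≠ 0 := by
        intro s hs
        have : (0:ℝ) < Real.sqrt (ψ s) := Real.sqrt_pos.2 hs
        positivity
      fun_prop (disch := assumption)
    have hval : ∀ s, f₀ s = Real.sqrt (ψ s) * k s := fun s => by rw [hf₀]
    have h2 : ContinuousOn F U := by
      apply h1.congr
      intro s hs
      simp only [hF]
      rw [hderiv' s hs, hval]
    exact h2.mono hIccU
  have hFint : IntervalIntegrable F MeasureTheory.volume 0 ℓ := by
    apply ContinuousOn.intervalIntegrable
    rwa [Set.uIcc_of_le hℓ.le]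
  have hGint : IntervalIntegrable G MeasureTheory.volume 0 ℓ := by
    apply Continuous.intervalIntegrable
    fun_prop
  -- pointwise comparison
  have hle : ∀ s ∈ Set.Icc (0:ℝ) ℓ, F s ≤ G s := by
    intro s hs
    have hψs : (0:ℝ) < ψ s := hψpos s hs
    have hq : (0:ℝ) < Real.sqrt (ψ s) := Real.sqrt_pos.2 hψs
    have hq2 : Real.sqrt (ψ s) ^ 2 = ψ s := Real.sq_sqrt hψs.le
    have := key_q (Real.sqrt (ψ s)) (deriv ψ s) (P s) c (k s) (k' s) hq (hPc s hs)
    rw [hq2] at this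
    have hval : f₀ s = Real.sqrt (ψ s) * k s := by rw [hf₀]
    simp only [hF, hG]
    rw [hderiv' s (hIccU hs), hval]
    exact this
  -- integrate
  have hint : (∫ s in (0:ℝ)..ℓ, F s) ≤ ∫ s in (0:ℝ)..ℓ, G s :=
    intervalIntegral.integral_mono_on hℓ.le hFint hGint hle
  have hGval : (∫ s in (0:ℝ)..ℓ, G s)
      = (4/3) * (Real.pi / ℓ) ^ 2 * (ℓ / 2) - c * (ℓ / 2) := by
    have e1 : ∀ s : ℝ, G s = (4/3) * (Real.pi/ℓ)^2 * Real.cos (Real.pi/ℓ * s) ^ 2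
        - c * Real.sin (Real.pi/ℓ * s) ^ 2 := by
      intro s
      simp only [hG, hk, hk']
      rw [show Real.pi * s / ℓ = Real.pi / ℓ * s by ring]
      ring
    simp only [e1]
    rw [intervalIntegral.integral_sub, intervalIntegral.integral_const_mul,
      intervalIntegral.integral_const_mul, cos_sq_int ℓ hℓ, sin_sq_int ℓ hℓ]
    · apply Continuous.intervalIntegrable; fun_prop
    · apply Continuous.intervalIntegrable; fun_prop
  have hkey : c * ℓ ^ 2 ≤ (4/3) * Real.pi ^ 2 := by
    have h0 : (0:ℝ) ≤ (4/3) * (Real.pi / ℓ) ^ 2 * (ℓ / 2) - c * (ℓ / 2) := by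
      rw [← hGval]; exact le_trans hstab hint
    have hℓ2 : (0:ℝ) < ℓ ^ 2 := by positivity
    have e : (4:ℝ)/3 * (Real.pi / ℓ) ^ 2 * (ℓ / 2) - c * (ℓ / 2)
        = (ℓ/2) * ((4/3) * Real.pi ^ 2 - c * ℓ ^ 2) / ℓ ^ 2 := by
      field_simp
    rw [e] at h0
    by_contra hX
    push_neg at hX
    have hneg : (ℓ/2) * ((4/3) * Real.pi ^ 2 - c * ℓ ^ 2) / ℓ ^ 2 < 0 :=
      div_neg_of_neg_of_pos (mul_neg_of_pos_of_neg (by positivity) (by linarith)) hℓ2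
    linarith
  -- conclude
  have h3 : (0:ℝ) < Real.sqrt 3 := Real.sqrt_pos.2 (by norm_num)
  have hcs : (0:ℝ) < Real.sqrt c := Real.sqrt_pos.2 hc
  have hr : (0:ℝ) ≤ (2 / Real.sqrt 3) * (Real.pi / Real.sqrt c) := by
    have := Real.pi_pos; positivity
  have hr2 : ((2 / Real.sqrt 3) * (Real.pi / Real.sqrt c)) ^ 2
      = (4/3) * Real.pi ^ 2 / c := by
    have e3 : Real.sqrt 3 ^ 2 = 3 := Real.sq_sqrt (by norm_num)
    have ec : Real.sqrt c ^ 2 = c := Real.sq_sqrt hc.le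
    rw [mul_pow, div_pow, div_pow, e3, ec]
    ring
  have hℓ2 : ℓ ^ 2 ≤ ((2 / Real.sqrt 3) * (Real.pi / Real.sqrt c)) ^ 2 := by
    rw [hr2]
    rw [le_div_iff₀ hc]
    nlinarith [hkey]
  calc ℓ = Real.sqrt (ℓ ^ 2) := (Real.sqrt_sq hℓ.le).symm
    _ ≤ Real.sqrt (((2 / Real.sqrt 3) * (Real.pi / Real.sqrt c)) ^ 2) :=
        Real.sqrt_le_sqrt hℓ2
    _ = (2 / Real.sqrt 3) * (Real.pi / Real.sqrt c) := Real.sqrt_sq hr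
end

section
/- Let ℓ > 0 be a real number, let ψ : ℝ → ℝ be smooth with ψ(s) > 0 for all s ∈ [0, ℓ], and let P : ℝ → ℝ be continuous. Suppose that for every smooth function f : ℝ → ℝ with f(0) = f(ℓ) = 0 one has ∫₀^ℓ ( ψ(s)⁻¹ f′(s)² − (P(s) + ψ(s)⁻² ψ′(s)²) ψ(s)⁻¹ f(s)² ) ds ≥ 0. Then for every smooth function k : ℝ → ℝ with k(0) = k(ℓ) = 0 one has ∫₀^ℓ ( (4/3) k′(s)² − P(s) k(s)² ) ds ≥ 0. -/
open Polynomial in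
/-- Every real polynomial has a polynomial antiderivative. -/
lemma stmt_2_antideriv (p : ℝ[X]) : ∃ Q : ℝ[X], Q.derivative = p := by
  refine ⟨∑ n ∈ p.support, C (p.coeff n / (n + 1)) * X ^ (n + 1), ?_⟩
  rw [map_sum]
  conv_rhs => rw [← Polynomial.sum_C_mul_X_pow_eq p, Polynomial.sum_def]
  refine Finset.sum_congr rfl fun n _ => ?_
  have h2 : p.coeff n / ((n : ℝ) + 1) * ((n + 1 : ℕ) : ℝ) = p.coeff n := by
    have hn1 : ((n : ℝ) + 1) ≠ 0 := by positivity
    push_cast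
    field_simp
  rw [Polynomial.derivative_C_mul_X_pow, Nat.add_sub_cancel, h2]

/-- The algebraic completing-the-square inequality. -/
lemma stmt_2_alg (r q a b Pv : ℝ) (hr : 0 < r) :
    (r ^ 2)⁻¹ * (q / (2 * r) * a + r * b) ^ 2
      - (Pv + ((r ^ 2)⁻¹) ^ 2 * q ^ 2) * (r ^ 2)⁻¹ * (r * a) ^ 2
      ≤ 4 / 3 * b ^ 2 - Pv * a ^ 2 := by
  rw [← sub_nonneg]
  have h1 : 4 / 3 * b ^ 2 - Pv * a ^ 2
      - ((r ^ 2)⁻¹ * (q / (2 * r) * a + r * b) ^ 2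
        - (Pv + ((r ^ 2)⁻¹) ^ 2 * q ^ 2) * (r ^ 2)⁻¹ * (r * a) ^ 2)
      = (2 * r ^ 2 * b - 3 * q * a) ^ 2 / (12 * r ^ 4) := by
    field_simp
    ring
  rw [h1]
  positivity

set_option maxHeartbeats 2000000 in
/-- Reduction step in the diameter bound proof: the weighted stability
inequality (weight `ψ`) implies the unweighted inequality with the factor
`4/3` in front of the gradient term. -/
theorem stmt_2 (ℓ : ℝ) (hℓ : 0 < ℓ)
    (ψ P : ℝ → ℝ) (hψ : ContDiff ℝ (⊤ : ℕ∞) ψ)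
    (hψpos : ∀ s ∈ Set.Icc (0 : ℝ) ℓ, 0 < ψ s)
    (hP : Continuous P)
    (hstab : ∀ f : ℝ → ℝ, ContDiff ℝ (⊤ : ℕ∞) f → f 0 = 0 → f ℓ = 0 →
      0 ≤ ∫ s in (0 : ℝ)..ℓ,
        ((ψ s)⁻¹ * (deriv f s) ^ 2
          - (P s + ((ψ s)⁻¹) ^ 2 * (deriv ψ s) ^ 2) * (ψ s)⁻¹ * (f s) ^ 2)) :
    ∀ k : ℝ → ℝ, ContDiff ℝ (⊤ : ℕ∞) k → k 0 = 0 → k ℓ = 0 →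
      0 ≤ ∫ s in (0 : ℝ)..ℓ,
        ((4 / 3) * (deriv k s) ^ 2 - P s * (k s) ^ 2) := by
  intro k hk hk0 hkℓ
  have hψc : Continuous ψ := hψ.continuous
  have hψd : Continuous (deriv ψ) := hψ.continuous_deriv (by simp)
  have hkc : Continuous k := hk.continuous
  have hkd : Continuous (deriv k) := hk.continuous_deriv (by simp)
  set sq : ℝ → ℝ := fun s => Real.sqrt (ψ s) with hsq
  set h : ℝ → ℝ := fun s => sq s * k s with hh
  set Dh : ℝ → ℝ := fun s => deriv ψ s / (2 * sq s) * k s + sq s * deriv k s with hDh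
  set Cc : ℝ → ℝ := fun s => (P s + ((ψ s)⁻¹) ^ 2 * (deriv ψ s) ^ 2) * (ψ s)⁻¹ with hCc
  set Wh : ℝ → ℝ := fun s => (ψ s)⁻¹ * (Dh s) ^ 2 - Cc s * (h s) ^ 2 with hWh
  have hIcc : Set.uIcc (0 : ℝ) ℓ = Set.Icc 0 ℓ := Set.uIcc_of_le hℓ.le
  have hψne : ∀ s ∈ Set.Icc (0 : ℝ) ℓ, ψ s ≠ 0 := fun s hs => (hψpos s hs).ne'
  -- derivative of h on [0, ℓ]
  have hhd : ∀ s ∈ Set.Icc (0 : ℝ) ℓ, HasDerivAt h (Dh s) s := by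
    intro s hs
    have hψs := hψpos s hs
    have h1 : HasDerivAt sq (deriv ψ s / (2 * sq s)) s := by
      have h0 := (Real.hasDerivAt_sqrt hψs.ne').comp s
        ((hψ.differentiable (by simp)) s).hasDerivAt
      have h2 : deriv ψ s / (2 * sq s) = 1 / (2 * √(ψ s)) * deriv ψ s := by
        simp only [hsq]
        ring
      rw [h2]
      exact h0
    exact h1.mul ((hk.differentiable (by simp)) s).hasDerivAt
  -- continuity facts
  have hsqc : Continuous sq := Real.continuous_sqrt.comp hψc
  have hsqne : ∀ s ∈ Set.Icc (0 : ℝ) ℓ, (2 : ℝ) * sq s ≠ 0 := by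
    intro s hs
    have : 0 < sq s := Real.sqrt_pos.2 (hψpos s hs)
    positivity
  have hDhc : ContinuousOn Dh (Set.Icc (0 : ℝ) ℓ) :=
    ((hψd.continuousOn.div (continuous_const.mul hsqc).continuousOn hsqne).mul
      hkc.continuousOn).add (hsqc.continuousOn.mul hkd.continuousOn)
  have hhc : Continuous h := hsqc.mul hkc
  have hinv : ContinuousOn (fun s => (ψ s)⁻¹) (Set.Icc (0 : ℝ) ℓ) :=
    hψc.continuousOn.inv₀ hψne
  have hCcc : ContinuousOn Cc (Set.Icc (0 : ℝ) ℓ) :=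
    (hP.continuousOn.add ((hinv.pow 2).mul (hψd.continuousOn.pow 2))).mul hinv
  have hWhc : ContinuousOn Wh (Set.Icc (0 : ℝ) ℓ) :=
    (hinv.mul (hDhc.pow 2)).sub (hCcc.mul (hhc.continuousOn.pow 2))
  have hWhint : IntervalIntegrable Wh MeasureTheory.volume 0 ℓ := by
    apply ContinuousOn.intervalIntegrable
    rwa [hIcc]
  have hDhint : IntervalIntegrable Dh MeasureTheory.volume 0 ℓ := by
    apply ContinuousOn.intervalIntegrable
    rwa [hIcc]
  have hh0 : h 0 = 0 := by simp [hh, hk0]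
  have hhℓ : h ℓ = 0 := by simp [hh, hkℓ]
  -- FTC for h
  have hhFTC : ∀ x ∈ Set.Icc (0 : ℝ) ℓ, h x = ∫ t in (0 : ℝ)..x, Dh t := by
    intro x hx
    have hsub : Set.uIcc (0 : ℝ) x ⊆ Set.Icc (0 : ℝ) ℓ := by
      rw [Set.uIcc_of_le hx.1]
      exact Set.Icc_subset_Icc le_rfl hx.2
    have := intervalIntegral.integral_eq_sub_of_hasDerivAt
      (fun t ht => hhd t (hsub ht))
      ((hDhc.mono hsub).intervalIntegrable)
    rw [this, hh0, sub_zero]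
  -- pointwise comparison Wh ≤ U
  have key : ∀ s ∈ Set.Icc (0 : ℝ) ℓ,
      Wh s ≤ 4 / 3 * (deriv k s) ^ 2 - P s * (k s) ^ 2 := by
    intro s hs
    have hψs := hψpos s hs
    have halg := stmt_2_alg (sq s) (deriv ψ s) (k s) (deriv k s) (P s)
      (Real.sqrt_pos.2 hψs)
    have hsp : sq s ^ 2 = ψ s := Real.sq_sqrt hψs.le
    rw [hsp] at halg
    simpa [hWh, hDh, hCc, hh] using halg
  -- main claim: 0 ≤ ∫ Wh
  have hWh_nonneg : 0 ≤ ∫ s in (0 : ℝ)..ℓ, Wh s := by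
    by_contra hneg
    push_neg at hneg
    set E : ℝ := -(∫ s in (0 : ℝ)..ℓ, Wh s) with hE
    have hE0 : 0 < E := by simp only [hE]; linarith
    -- uniform bounds on [0, ℓ]
    obtain ⟨A, hA⟩ := (isCompact_Icc (a := (0:ℝ)) (b := ℓ)).exists_bound_of_continuousOn hinv
    obtain ⟨B, hB⟩ := (isCompact_Icc (a := (0:ℝ)) (b := ℓ)).exists_bound_of_continuousOn hCcc
    obtain ⟨M₁, hM₁⟩ :=
      (isCompact_Icc (a := (0:ℝ)) (b := ℓ)).exists_bound_of_continuousOn hDhc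
    obtain ⟨M₂, hM₂⟩ :=
      (isCompact_Icc (a := (0:ℝ)) (b := ℓ)).exists_bound_of_continuousOn hhc.continuousOn
    have h0mem : (0 : ℝ) ∈ Set.Icc (0 : ℝ) ℓ := ⟨le_rfl, hℓ.le⟩
    have hA0 : 0 ≤ A := le_trans (norm_nonneg _) (hA 0 h0mem)
    have hB0 : 0 ≤ B := le_trans (norm_nonneg _) (hB 0 h0mem)
    have hM₁0 : 0 ≤ M₁ := le_trans (norm_nonneg _) (hM₁ 0 h0mem)
    have hM₂0 : 0 ≤ M₂ := le_trans (norm_nonneg _) (hM₂ 0 h0mem)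
    set R : ℝ := 2 * A * (2 * M₁ + 2) + 2 * B * ℓ * (2 * M₂ + 2 * ℓ) with hR
    have hR0 : 0 ≤ R := by
      have h1 : (0:ℝ) ≤ 2 * A * (2 * M₁ + 2) := by positivity
      have h2 : (0:ℝ) ≤ 2 * B * ℓ * (2 * M₂ + 2 * ℓ) := by positivity
      linarith
    -- choice of δ
    set δ : ℝ := min 1 (E / (R * ℓ + 1)) with hδ
    have hδ0 : 0 < δ := lt_min one_pos (div_pos hE0 (by positivity))
    have hδ1 : δ ≤ 1 := min_le_left _ _
    have hδE : δ * R * ℓ < E := by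
      have h7 : δ * (R * ℓ + 1) ≤ E := by
        have h8 : δ ≤ E / (R * ℓ + 1) := min_le_right _ _
        calc δ * (R * ℓ + 1) ≤ E / (R * ℓ + 1) * (R * ℓ + 1) :=
              mul_le_mul_of_nonneg_right h8 (by positivity)
          _ = E := div_mul_cancel₀ _ (by positivity)
      nlinarith
    -- polynomial approximation of Dh
    obtain ⟨p, hp⟩ := exists_polynomial_near_of_continuousOn 0 ℓ Dh hDhc δ hδ0
    obtain ⟨Q, hQ⟩ := stmt_2_antideriv p
    have hQd : ∀ x : ℝ, HasDerivAt (fun y => Q.eval y) (p.eval x) x := by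
      intro x
      have := Q.hasDerivAt x
      rwa [hQ] at this
    set e : ℝ := (Q.eval ℓ - Q.eval 0) / ℓ with he
    set f : ℝ → ℝ := fun x => Q.eval x - Q.eval 0 - e * x with hf
    have hfd : ∀ x : ℝ, HasDerivAt f (p.eval x - e) x := by
      intro x
      have h1 : HasDerivAt (fun y : ℝ => e * y) e x := by
        simpa using (hasDerivAt_id x).const_mul e
      exact ((hQd x).sub_const _).sub h1
    have hfderiv : deriv f = fun x => p.eval x - e := funext fun x => (hfd x).deriv
    have hfC : ContDiff ℝ (⊤ : ℕ∞) f := by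
      have hQcd : ContDiff ℝ (⊤ : ℕ∞) (fun x : ℝ => Q.eval x) := by
        rw [contDiff_iff_contDiffAt]
        intro x
        exact ((AnalyticOnNhd.eval_polynomial (𝕜 := ℝ) Q) x (Set.mem_univ x)).contDiffAt
      exact (hQcd.sub contDiff_const).sub (contDiff_const.mul contDiff_id)
    have hf0 : f 0 = 0 := by simp [hf]
    have hfℓ : f ℓ = 0 := by
      have : e * ℓ = Q.eval ℓ - Q.eval 0 := by
        rw [he]; field_simp
      simp [hf, this]
    have hpc : Continuous fun x : ℝ => p.eval x := p.continuous
    have hpint : IntervalIntegrable (fun x : ℝ => p.eval x) MeasureTheory.volume 0 ℓ :=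
      hpc.intervalIntegrable _ _
    -- FTC for Q
    have hQFTC : ∀ x ∈ Set.Icc (0 : ℝ) ℓ,
        Q.eval x - Q.eval 0 = ∫ t in (0 : ℝ)..x, p.eval t := by
      intro x _
      exact (intervalIntegral.integral_eq_sub_of_hasDerivAt (fun t _ => hQd t)
        (hpc.intervalIntegrable _ _)).symm
    -- bound on e
    have heb : |e| ≤ δ := by
      have h1 : Q.eval ℓ - Q.eval 0 = ∫ t in (0 : ℝ)..ℓ, (p.eval t - Dh t) := by
        rw [intervalIntegral.integral_sub hpint hDhint,
          ← hQFTC ℓ ⟨hℓ.le, le_rfl⟩]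
        have h2 := hhFTC ℓ ⟨hℓ.le, le_rfl⟩
        rw [hhℓ] at h2
        rw [← h2, sub_zero]
      have h3 : |Q.eval ℓ - Q.eval 0| ≤ δ * ℓ := by
        rw [h1]
        have h4 := intervalIntegral.norm_integral_le_of_norm_le_const
          (C := δ) (f := fun t => p.eval t - Dh t) (a := (0:ℝ)) (b := ℓ) ?_
        · rw [Real.norm_eq_abs] at h4
          calc |∫ t in (0:ℝ)..ℓ, (p.eval t - Dh t)| ≤ δ * |ℓ - 0| := h4
            _ = δ * ℓ := by rw [sub_zero, abs_of_pos hℓ]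
        · intro x hx
          have hx' : x ∈ Set.Icc (0 : ℝ) ℓ := by
            rw [Set.uIoc_of_le hℓ.le] at hx
            exact Set.Ioc_subset_Icc_self hx
          rw [Real.norm_eq_abs]
          exact (hp x hx').le
      rw [he, abs_div, abs_of_pos hℓ, div_le_iff₀ hℓ]
      linarith
    -- closeness of derivatives and values
    have hdfclose : ∀ s ∈ Set.Icc (0 : ℝ) ℓ, |deriv f s - Dh s| ≤ 2 * δ := by
      intro s hs
      rw [hfderiv]
      have h1 := (hp s hs).le
      have h2 := abs_le.mp heb
      have h3 := abs_le.mp h1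
      rw [abs_le]
      constructor <;> simp only [] <;> nlinarith
    have hfclose : ∀ s ∈ Set.Icc (0 : ℝ) ℓ, |f s - h s| ≤ 2 * (δ * ℓ) := by
      intro s hs
      have hsub : Set.uIcc (0 : ℝ) s ⊆ Set.Icc (0 : ℝ) ℓ := by
        rw [Set.uIcc_of_le hs.1]
        exact Set.Icc_subset_Icc le_rfl hs.2
      have h1 : f s - h s = (∫ t in (0 : ℝ)..s, (p.eval t - Dh t)) - e * s := by
        rw [intervalIntegral.integral_sub
            (hpc.intervalIntegrable _ _)
            ((hDhc.mono hsub).intervalIntegrable),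
          ← hQFTC s hs, ← hhFTC s hs]
        simp only [hf]
        ring
      have h2 : |∫ t in (0 : ℝ)..s, (p.eval t - Dh t)| ≤ δ * ℓ := by
        have h4 := intervalIntegral.norm_integral_le_of_norm_le_const
          (C := δ) (f := fun t => p.eval t - Dh t) (a := (0:ℝ)) (b := s) ?_
        · rw [Real.norm_eq_abs] at h4
          calc |∫ t in (0:ℝ)..s, (p.eval t - Dh t)| ≤ δ * |s - 0| := h4
            _ ≤ δ * ℓ := by
                rw [sub_zero, abs_of_nonneg hs.1]
                exact mul_le_mul_of_nonneg_left hs.2 hδ0.le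
        · intro x hx
          have hx' : x ∈ Set.Icc (0 : ℝ) ℓ := by
            rw [Set.uIoc_of_le hs.1] at hx
            exact Set.Icc_subset_Icc le_rfl hs.2 (Set.Ioc_subset_Icc_self hx)
          rw [Real.norm_eq_abs]
          exact (hp x hx').le
      have h3 : |e * s| ≤ δ * ℓ := by
        rw [abs_mul, abs_of_nonneg hs.1]
        exact mul_le_mul heb hs.2 hs.1 hδ0.le
      calc |f s - h s| = |(∫ t in (0 : ℝ)..s, (p.eval t - Dh t)) - e * s| := by rw [h1]
        _ ≤ |∫ t in (0 : ℝ)..s, (p.eval t - Dh t)| + |e * s| := abs_sub _ _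
        _ ≤ δ * ℓ + δ * ℓ := add_le_add h2 h3
        _ = 2 * (δ * ℓ) := by ring
    -- pointwise bound on the difference of integrands
    set Wf : ℝ → ℝ := fun s => (ψ s)⁻¹ * (deriv f s) ^ 2 - Cc s * (f s) ^ 2 with hWf
    have hWdiff : ∀ s ∈ Set.Icc (0 : ℝ) ℓ, |Wf s - Wh s| ≤ δ * R := by
      intro s hs
      have hb5 : |(ψ s)⁻¹| ≤ A := by
        have := hA s hs; rwa [Real.norm_eq_abs] at this
      have hb6 : |Cc s| ≤ B := by
        have := hB s hs; rwa [Real.norm_eq_abs] at this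
      have hb3 : |Dh s| ≤ M₁ := by
        have := hM₁ s hs; rwa [Real.norm_eq_abs] at this
      have hb4 : |h s| ≤ M₂ := by
        have := hM₂ s hs; rwa [Real.norm_eq_abs] at this
      have hb1 := hdfclose s hs
      have hb2 := hfclose s hs
      have hdfb : |deriv f s| ≤ M₁ + 2 := by
        have := abs_sub_abs_le_abs_sub (deriv f s) (Dh s)
        linarith
      have hfb : |f s| ≤ M₂ + 2 * ℓ := by
        have := abs_sub_abs_le_abs_sub (f s) (h s)
        nlinarith
      have key1 : |(deriv f s) ^ 2 - (Dh s) ^ 2| ≤ 2 * δ * (2 * M₁ + 2) := by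
        have hq : (deriv f s) ^ 2 - (Dh s) ^ 2
            = (deriv f s - Dh s) * (deriv f s + Dh s) := by ring
        rw [hq, abs_mul]
        have hsum : |deriv f s + Dh s| ≤ 2 * M₁ + 2 := by
          have := abs_add_le (deriv f s) (Dh s)
          linarith
        exact mul_le_mul hb1 hsum (abs_nonneg _) (by positivity)
      have key2 : |(f s) ^ 2 - (h s) ^ 2| ≤ 2 * (δ * ℓ) * (2 * M₂ + 2 * ℓ) := by
        have hq : (f s) ^ 2 - (h s) ^ 2 = (f s - h s) * (f s + h s) := by ring
        rw [hq, abs_mul]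
        have hsum : |f s + h s| ≤ 2 * M₂ + 2 * ℓ := by
          have := abs_add_le (f s) (h s)
          linarith
        exact mul_le_mul hb2 hsum (abs_nonneg _) (by positivity)
      have hq2 : Wf s - Wh s
          = (ψ s)⁻¹ * ((deriv f s) ^ 2 - (Dh s) ^ 2) - Cc s * ((f s) ^ 2 - (h s) ^ 2) := by
        simp only [hWf, hWh]; ring
      calc |Wf s - Wh s|
          = |(ψ s)⁻¹ * ((deriv f s) ^ 2 - (Dh s) ^ 2)
              - Cc s * ((f s) ^ 2 - (h s) ^ 2)| := by rw [hq2]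
        _ ≤ |(ψ s)⁻¹ * ((deriv f s) ^ 2 - (Dh s) ^ 2)|
              + |Cc s * ((f s) ^ 2 - (h s) ^ 2)| := abs_sub _ _
        _ = |(ψ s)⁻¹| * |(deriv f s) ^ 2 - (Dh s) ^ 2|
              + |Cc s| * |(f s) ^ 2 - (h s) ^ 2| := by rw [abs_mul, abs_mul]
        _ ≤ A * (2 * δ * (2 * M₁ + 2)) + B * (2 * (δ * ℓ) * (2 * M₂ + 2 * ℓ)) :=
            add_le_add (mul_le_mul hb5 key1 (abs_nonneg _) hA0)
              (mul_le_mul hb6 key2 (abs_nonneg _) hB0)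
        _ = δ * R := by rw [hR]; ring
    -- integrability of Wf
    have hdfc : Continuous (deriv f) := by
      rw [hfderiv]; exact hpc.sub continuous_const
    have hWfc : ContinuousOn Wf (Set.Icc (0 : ℝ) ℓ) :=
      (hinv.mul (hdfc.continuousOn.pow 2)).sub
        (hCcc.mul ((hfC.continuous.continuousOn).pow 2))
    have hWfint : IntervalIntegrable Wf MeasureTheory.volume 0 ℓ := by
      apply ContinuousOn.intervalIntegrable
      rwa [hIcc]
    -- hstab applied to f
    have hstabf := hstab f hfC hf0 hfℓ
    have hWfeq : ∀ s : ℝ, ((ψ s)⁻¹ * (deriv f s) ^ 2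
        - (P s + ((ψ s)⁻¹) ^ 2 * (deriv ψ s) ^ 2) * (ψ s)⁻¹ * (f s) ^ 2) = Wf s := by
      intro s
      simp only [hWf, hCc]
      try ring
    rw [intervalIntegral.integral_congr (g := Wf) (fun s _ => hWfeq s)] at hstabf
    -- compare integrals
    have hintdiff : |(∫ s in (0 : ℝ)..ℓ, Wf s) - ∫ s in (0 : ℝ)..ℓ, Wh s| ≤ δ * R * ℓ := by
      rw [← intervalIntegral.integral_sub hWfint hWhint]
      have h4 := intervalIntegral.norm_integral_le_of_norm_le_const
        (C := δ * R) (f := fun s => Wf s - Wh s) (a := (0:ℝ)) (b := ℓ) ?_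
      · rw [Real.norm_eq_abs] at h4
        calc |∫ s in (0:ℝ)..ℓ, (Wf s - Wh s)| ≤ δ * R * |ℓ - 0| := h4
          _ = δ * R * ℓ := by rw [sub_zero, abs_of_pos hℓ]
      · intro x hx
        have hx' : x ∈ Set.Icc (0 : ℝ) ℓ := by
          rw [Set.uIoc_of_le hℓ.le] at hx
          exact Set.Ioc_subset_Icc_self hx
        rw [Real.norm_eq_abs]
        exact hWdiff x hx'
    have h9 := abs_le.mp hintdiff
    have h10 : ∫ s in (0 : ℝ)..ℓ, Wh s = -E := by rw [hE]; ring
    linarith [hstabf, h9.2]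
  -- conclude
  have hUint : IntervalIntegrable
      (fun s => 4 / 3 * (deriv k s) ^ 2 - P s * (k s) ^ 2) MeasureTheory.volume 0 ℓ :=
    ((continuous_const.mul (hkd.pow 2)).sub (hP.mul (hkc.pow 2))).intervalIntegrable _ _
  calc (0 : ℝ) ≤ ∫ s in (0 : ℝ)..ℓ, Wh s := hWh_nonneg
    _ ≤ ∫ s in (0 : ℝ)..ℓ, (4 / 3 * (deriv k s) ^ 2 - P s * (k s) ^ 2) :=
        intervalIntegral.integral_mono_on hℓ.le hWhint hUint key
end
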